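/- For every positive integer n, the restriction φ of the map Φ to ℰ_n is a bijection from ℰ_n to 𝒢_n, where Φ is the bijection from bicolored binary trees on [n] to bicolored plane trees on [n+1] rooted at a black vertex n+1 given by: the root of B becomes the first child of the black root n+1; v is the left child of u in B iff v is the first child of u in Φ(B); v is the right child of u in B iff v is the sibling immediately to the right of u in Φ(B); and colors of vertices are preserved. -/

import Mathlib

/-- Labeled bicolored binary trees: each vertex carries a label and a color
(`true` = black, `false` = white), and has a left and a right (possibly empty) subtree. -/
inductive CBT : Type
  | nil : CBT
  | node (label : ℕ) (black : Bool) (l r : CBT) : CBT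
deriving DecidableEq

/-- The multiset of labels of a bicolored binary tree. -/
def CBT.labels : CBT → Multiset ℕ
  | .nil => 0
  | .node a _ l r => a ::ₘ (l.labels + r.labels)

/-- The smallest label of a bicolored binary tree (`⊤` for the empty tree). -/
noncomputable def CBT.minL : CBT → ℕ∞
  | .nil => ⊤
  | .node a _ l r => min (a : ℕ∞) (min l.minL r.minL)

/-- A vertex is *proper* if its label is the smallest among its descendants (including
itself), and *improper* otherwise; so the vertex `node a c l r` is improper iff
`min l.minL r.minL < a`.  `CBT.improperBlack B` says every improper vertex of `B` is black. -/
def CBT.improperBlack : CBT → Prop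
  | .nil => True
  | .node a c l r =>
      (min l.minL r.minL < (a : ℕ∞) → c = true) ∧ l.improperBlack ∧ r.improperBlack

/-- `𝒟_n`: bicolored binary trees on `[n] = {1,…,n}` whose improper vertices are all black. -/
def Dset (n : ℕ) : Set CBT :=
  {B | B.labels = (Finset.Icc 1 n).val ∧ B.improperBlack}

/-- `CBT.leftImp B` says every improper vertex of `B` is *left improper*, i.e. the
smallest label in its left subtree is smaller than the smallest label in its right
subtree. -/
def CBT.leftImp : CBT → Prop
  | .nil => True
  | .node a _ l r =>
      (min l.minL r.minL < (a : ℕ∞) → l.minL < r.minL) ∧ l.leftImp ∧ r.leftImp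

/-- `ℰ_n`: bicolored binary trees on `[n]` whose improper vertices are all left improper. -/
def Eset (n : ℕ) : Set CBT :=
  {B | B.labels = (Finset.Icc 1 n).val ∧ B.leftImp}

/-- The flip map `f`: it performs the flip `f_v` (swap the two subtrees of `v` and change
the color of `v`) simultaneously at every *right improper* vertex `v`, i.e. at every
vertex with `m(R) < m(L)` and `m(R) < label`. -/
noncomputable def CBT.flip : CBT → CBT
  | .nil => .nil
  | .node a c l r =>
      if r.minL < l.minL ∧ r.minL < (a : ℕ∞) then .node a (!c) r.flip l.flip
      else .node a c l.flip r.flip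

/-- Bicolored plane trees: a root with a label, a color (`true` = black), and a linearly
ordered list of (plane-tree) subtrees. -/
inductive CPT : Type
  | node (label : ℕ) (black : Bool) (children : List CPT) : CPT

/-- The multiset of labels of a bicolored plane tree. -/
def CPT.labels : CPT → Multiset ℕ
  | .node a _ ch => a ::ₘ (ch.attach.map fun c => CPT.labels c.1).sum
decreasing_by
  have := List.sizeOf_lt_of_mem c.2
  simp only [CPT.node.sizeOf_spec]
  omega

/-- Root label. -/
def CPT.rootLabel : CPT → ℕ
  | .node a _ _ => a

/-- Root color. -/
def CPT.rootBlack : CPT → Bool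
  | .node _ c _ => c

/-- Smallest label of a bicolored plane tree, as an element of `ℕ∞`. -/
noncomputable def CPT.minL (P : CPT) : ℕ∞ := (P.labels.map ((↑) : ℕ → ℕ∞)).inf

/-- At every vertex of the plane tree, the smallest labels of the descendant subtrees of
its children increase from left to right.  This is the condition identifying (bicolored,
non-plane) rooted trees inside bicolored plane trees. -/
noncomputable def CPT.ordered : CPT → Prop
  | .node _ _ ch => List.Chain' (· < ·) (ch.map CPT.minL) ∧ ∀ c ∈ ch, c.ordered

/-- The natural "left child → first child, right child → next sibling" correspondence,
sending a bicolored binary tree to the list of bicolored plane trees formed by its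
leftmost spine. -/
def CBT.toForest : CBT → List CPT
  | .nil => []
  | .node a c l r => CPT.node a c l.toForest :: r.toForest

/-- The map `Φ` from bicolored binary trees on `[n]` to bicolored plane trees on `[n+1]`
with black root `n+1`: the root of `B` becomes the first child of the black root `n+1`;
`v` is the left child of `u` in `B` iff `v` is the first child of `u` in `Φ(B)`; `v` is
the right child of `u` in `B` iff `v` is the sibling immediately to the right of `u` in
`Φ(B)`; colors are preserved. -/
def Phi (n : ℕ) (B : CBT) : CPT := CPT.node (n + 1) true B.toForest

/-- `𝒢_n`: bicolored plane trees on `[n+1]` whose root is the vertex `n+1` colored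
black, satisfying the `ordered` condition (i.e. plane trees representing non-plane
bicolored trees on `[n+1]` rooted at black `n+1`). -/
noncomputable def Gset (n : ℕ) : Set CPT :=
  {Q | Q.labels = (Finset.Icc 1 (n + 1)).val ∧ Q.rootLabel = n + 1 ∧
       Q.rootBlack = true ∧ Q.ordered}

/-! `Φ` is the rotation correspondence between binary trees and plane forests, so it is
injective and hits every plane tree with black root `n + 1`; it remains to match the side
conditions.  Under `Φ`, the plane subtrees hanging from the root of `Φ(node a c l r)` are
`node a c Φ(l)` followed by those of `Φ(r)`, whose smallest labels are `min a m(l)` and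
(collectively) `m(r)`.  So the children of that vertex are ordered exactly when
`min a m(l) < m(r)`, and since `a ≠ m(r)` this says that `a` is proper or left improper. -/

lemma List.isChain_lt_cons_iff {α : Type*} [Preorder α] {x : α} {L : List α} :
    (x :: L).IsChain (· < ·) ↔ (∀ y ∈ L, x < y) ∧ L.IsChain (· < ·) := by
  simp only [List.isChain_iff_pairwise, List.pairwise_cons]

lemma min_lt_imp_lt_iff_min_lt {α : Type*} [LinearOrder α] {x y z : α} (hzx : z ≠ x) :
    (min y z < x → y < z) ↔ min x y < z := by
  grind

lemma CPT.labels_node (a : ℕ) (c : Bool) (ch : List CPT) :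
    (CPT.node a c ch).labels = a ::ₘ (ch.map CPT.labels).sum := by
  rw [CPT.labels, List.attach_map_val]

lemma CPT.ordered_node (a : ℕ) (c : Bool) (ch : List CPT) :
    (CPT.node a c ch).ordered ↔ (ch.map CPT.minL).IsChain (· < ·) ∧ ∀ T ∈ ch, T.ordered := by
  rw [CPT.ordered]
  rfl

namespace CBT

lemma labels_toForest : ∀ B : CBT, (B.toForest.map CPT.labels).sum = B.labels
  | .nil => rfl
  | .node a c l r => by
      simp only [toForest, List.map_cons, List.sum_cons, CPT.labels_node, labels,
        labels_toForest l, labels_toForest r, Multiset.cons_add]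

lemma labels_node_toForest (a : ℕ) (c : Bool) (B : CBT) :
    (CPT.node a c B.toForest).labels = a ::ₘ B.labels := by
  rw [CPT.labels_node, labels_toForest]

lemma minL_eq_inf : ∀ B : CBT, B.minL = (B.labels.map ((↑) : ℕ → ℕ∞)).inf
  | .nil => rfl
  | .node a c l r => by
      simp only [minL, labels, Multiset.map_cons, Multiset.map_add, Multiset.inf_cons,
        Multiset.inf_add, minL_eq_inf l, minL_eq_inf r]

lemma minL_node_toForest (a : ℕ) (c : Bool) (B : CBT) :
    (CPT.node a c B.toForest).minL = min (a : ℕ∞) B.minL := by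
  rw [CPT.minL, labels_node_toForest, Multiset.map_cons, Multiset.inf_cons, minL_eq_inf]

lemma minL_eq_top_or_mem : ∀ B : CBT, B.minL = ⊤ ∨ ∃ m ∈ B.labels, B.minL = m
  | .nil => .inl rfl
  | .node a c l r => by
      have hl := minL_eq_top_or_mem l
      have hr := minL_eq_top_or_mem r
      rcases min_choice (a : ℕ∞) (min l.minL r.minL) with h | h <;> rw [minL, h]
      · exact .inr ⟨a, by simp [labels], rfl⟩
      rcases min_choice l.minL r.minL with h' | h' <;> rw [h']
      · exact hl.imp_right fun ⟨m, hm, e⟩ => ⟨m, by simp [labels, hm], e⟩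
      · exact hr.imp_right fun ⟨m, hm, e⟩ => ⟨m, by simp [labels, hm], e⟩

lemma minL_ne_coe_of_notMem {B : CBT} {a : ℕ} (ha : a ∉ B.labels) : B.minL ≠ a := by
  rcases minL_eq_top_or_mem B with h | ⟨m, hm, h⟩
  · simp [h]
  · rw [h, Ne, Nat.cast_inj]
    rintro rfl
    exact ha hm

lemma lt_minL_iff {x : ℕ∞} (hx : x < ⊤) :
    ∀ {B : CBT}, x < B.minL ↔ ∀ T ∈ B.toForest, x < T.minL
  | .nil => by simpa [minL, toForest] using hx
  | .node a c l r => by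
      simp only [toForest, List.forall_mem_cons, minL_node_toForest, ← lt_minL_iff hx, minL,
        lt_min_iff, and_assoc]

-- The root `node a c` is arbitrary so that the induction hypothesis applies to the
-- subtree `node b d l.toForest`.
lemma leftImp_iff_ordered (a : ℕ) (c : Bool) :
    ∀ {B : CBT}, B.labels.Nodup → (B.leftImp ↔ (CPT.node a c B.toForest).ordered)
  | .nil, _ => by simp [leftImp, toForest, CPT.ordered_node]
  | .node b d l r, hB => by
      rw [labels, Multiset.nodup_cons, Multiset.nodup_add] at hB
      obtain ⟨hb, hl, hr, -⟩ := hB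
      have hrb : r.minL ≠ b := minL_ne_coe_of_notMem fun h => hb (Multiset.mem_add.mpr (.inr h))
      have hbl : min (b : ℕ∞) l.minL < ⊤ := (min_le_left _ _).trans_lt (WithTop.coe_lt_top b)
      simp only [leftImp, CPT.ordered_node, toForest, List.map_cons, List.forall_mem_cons,
        List.isChain_lt_cons_iff, List.forall_mem_map, minL_node_toForest, ← lt_minL_iff hbl,
        min_lt_imp_lt_iff_min_lt hrb, leftImp_iff_ordered b d hl, leftImp_iff_ordered a c hr]
      tauto

def ofForest : List CPT → CBT
  | [] => .nil
  | .node a c ch :: rest => .node a c (ofForest ch) (ofForest rest)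

lemma ofForest_toForest : ∀ B : CBT, ofForest B.toForest = B
  | .nil => by rw [toForest, ofForest]
  | .node a c l r => by rw [toForest, ofForest, ofForest_toForest l, ofForest_toForest r]

lemma toForest_ofForest : ∀ F : List CPT, (ofForest F).toForest = F
  | [] => by rw [ofForest, toForest]
  | .node a c ch :: rest => by rw [ofForest, toForest, toForest_ofForest ch, toForest_ofForest rest]

end CBT

lemma Phi_injective (n : ℕ) : Function.Injective (Phi n) := by
  intro B B' h
  injection h with _ _ h
  rw [← CBT.ofForest_toForest B, ← CBT.ofForest_toForest B', h]

lemma Finset.Icc_one_succ_val (n : ℕ) :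
    (Finset.Icc 1 (n + 1)).val = (n + 1) ::ₘ (Finset.Icc 1 n).val := by
  rw [← Finset.insert_Icc_right_eq_Icc_add_one (Nat.le_add_left 1 n),
    Finset.insert_val_of_notMem (by simp)]

lemma Phi_mem_Gset_iff (n : ℕ) (B : CBT) : Phi n B ∈ Gset n ↔ B ∈ Eset n := by
  simp only [Gset, Eset, Set.mem_ofPred_eq, Phi, CPT.rootLabel, CPT.rootBlack, true_and,
    CBT.labels_node_toForest, Finset.Icc_one_succ_val, Multiset.cons_inj_right]
  exact and_congr_right fun hB => (CBT.leftImp_iff_ordered _ _ (hB ▸ Finset.nodup _)).symm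

lemma Gset_subset_range_Phi (n : ℕ) : Gset n ⊆ Set.range (Phi n) := by
  rintro ⟨a, c, F⟩ ⟨-, ha, hc, -⟩
  cases ha
  cases hc
  exact ⟨CBT.ofForest F, by rw [Phi, CBT.toForest_ofForest]⟩

theorem phi_bijOn_general (n : ℕ) :
    Set.BijOn (Phi n) (Eset n) (Gset n) := by
  refine ⟨fun B hB => (Phi_mem_Gset_iff n B).mpr hB, (Phi_injective n).injOn, ?_⟩
  intro Q hQ
  obtain ⟨B, rfl⟩ := Gset_subset_range_Phi n hQ
  exact ⟨B, (Phi_mem_Gset_iff n B).mp hQ, rfl⟩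

/-- The restriction `φ` of `Φ` to `ℰ_n` is a bijection from `ℰ_n` onto `𝒢_n`. -/
theorem phi_bijOn (n : ℕ) (hn : 0 < n) :
    Set.BijOn (Phi n) (Eset n) (Gset n) :=
  phi_bijOn_general n
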